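/- arXiv:2506.23054 — 4 statements merged into one kernel-verified Lean document; each statement's English description precedes it below -/
import Mathlib

section
/- Let 𝒢 be a hereditary class of finite simple graphs and let k ≥ 1 be an integer. If 𝒢 is degree-bounded, then the k-extension 𝒢^(k) of 𝒢 is also degree-bounded. -/
open Classical

/-- The biclique number of `G`: the largest `s` such that `G` contains `K_{s,s}` as a (not
necessarily induced) subgraph. -/
noncomputable def bicliqueNum {V : Type*} [Fintype V] (G : SimpleGraph V) : ℕ :=
  sSup {s | ∃ A B : Finset V, Disjoint A B ∧ A.card = s ∧ B.card = s ∧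
    ∀ a ∈ A, ∀ b ∈ B, G.Adj a b}

/-- The degeneracy of `G`: the least `d` such that every nonempty subgraph of `G` has a vertex
of degree at most `d` (equivalently, every nonempty set `S` of vertices contains a vertex with
at most `d` neighbours in `S`). -/
noncomputable def degeneracy {V : Type*} [Fintype V] (G : SimpleGraph V) : ℕ :=
  sInf {d | ∀ S : Finset V, S.Nonempty → ∃ v ∈ S, (S.filter fun u => G.Adj v u).card ≤ d}

/-- Given a `k`-edge-colouring `φ` of `G`, a colour `c` and a vertex subset `S`, the graph on
`S` whose edges are the colour-`c` edges of `G` with both endpoints in `S`. -/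
def monochromaticInduced {V : Type*} (G : SimpleGraph V) {k : ℕ} (φ : Sym2 V → Fin k)
    (c : Fin k) (S : Set V) : SimpleGraph S where
  Adj u v := G.Adj u.1 v.1 ∧ φ s(u.1, v.1) = c
  symm := ⟨fun u v ⟨h, hc⟩ => ⟨h.symm, by rwa [Sym2.eq_swap]⟩⟩
  loopless := ⟨fun u ⟨h, _⟩ => G.ne_of_adj h rfl⟩

/-! Every colour class of `G` is isomorphic to a graph of the class (take `S = V`), and its
bicliques are bicliques of `G`, so it is `d`-degenerate for `d = max_{m ≤ τ(G)} f m`. A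
`d`-degenerate graph has degree sum at most `2d|T|` inside every vertex set `T`; summing over the
`k` colours, the degree sum of `G` inside `T` is at most `2kd|T|`, so some vertex of `T` has at
most `2kd` neighbours in `T`. -/

namespace SimpleGraph

variable {V W : Type*} {G : SimpleGraph V} {d : ℕ}

def IsDegenerate (G : SimpleGraph V) (d : ℕ) : Prop :=
  ∀ S : Finset V, S.Nonempty → ∃ v ∈ S, (S.filter fun u => G.Adj v u).card ≤ d

lemma isDegenerate_degeneracy [Fintype V] (G : SimpleGraph V) :
    G.IsDegenerate (degeneracy G) :=
  Nat.sInf_mem (s := {d | G.IsDegenerate d}) ⟨Fintype.card V, fun _ ⟨v, hv⟩ =>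
    ⟨v, hv, (Finset.card_filter_le _ _).trans (Finset.card_le_univ _)⟩⟩

lemma degeneracy_le_of_isDegenerate [Fintype V] (h : G.IsDegenerate d) : degeneracy G ≤ d :=
  Nat.sInf_le h

lemma IsDegenerate.mono {d' : ℕ} (h : G.IsDegenerate d) (hd : d ≤ d') : G.IsDegenerate d' :=
  fun S hS => (h S hS).imp fun _ ⟨hv, hle⟩ => ⟨hv, hle.trans hd⟩

lemma IsDegenerate.comap {H : SimpleGraph W} (h : H.IsDegenerate d) (f : G →g H)
    (hf : Function.Injective f) : G.IsDegenerate d := by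
  intro S hS
  obtain ⟨w, hw, hle⟩ := h (S.map ⟨f, hf⟩) hS.map
  obtain ⟨v, hv, rfl⟩ := Finset.mem_map.1 hw
  refine ⟨v, hv, le_trans (Finset.card_le_card_of_injOn f ?_ hf.injOn) hle⟩
  intro u hu
  simp only [Finset.coe_filter, Set.mem_ofPred_eq, Finset.mem_map] at hu ⊢
  exact ⟨⟨u, hu.1, rfl⟩, f.map_rel hu.2⟩

lemma sum_card_adj_insert {v : V} {T : Finset V} (hv : v ∉ T) :
    ∑ u ∈ insert v T, ((insert v T).filter fun w => G.Adj u w).card =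
      ∑ u ∈ T, (T.filter fun w => G.Adj u w).card + 2 * (T.filter fun w => G.Adj v w).card := by
  simp only [Finset.card_filter, Finset.sum_insert hv, G.irrefl, if_false, zero_add,
    Finset.sum_add_distrib]
  have hsymm :
      ∑ u ∈ T, (if G.Adj u v then 1 else 0) = ∑ w ∈ T, (if G.Adj v w then 1 else 0) :=
    Finset.sum_congr rfl fun u _ => by rw [G.adj_comm]
  rw [hsymm]
  ring

lemma IsDegenerate.sum_card_adj_le (h : G.IsDegenerate d) (T : Finset V) :
    ∑ v ∈ T, (T.filter fun u => G.Adj v u).card ≤ 2 * d * T.card := by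
  induction T using Finset.strongInduction with
  | H T ih =>
    rcases T.eq_empty_or_nonempty with rfl | hT
    · simp
    obtain ⟨v, hv, hdeg⟩ := h T hT
    have hsub : ((T.erase v).filter fun u => G.Adj v u).card ≤ d :=
      (Finset.card_le_card (Finset.filter_subset_filter _ (Finset.erase_subset v T))).trans hdeg
    have hrest := ih (T.erase v) (Finset.erase_ssubset hv)
    rw [← Finset.insert_erase hv, sum_card_adj_insert (Finset.notMem_erase v T),
      Finset.card_insert_of_notMem (Finset.notMem_erase v T)]
    linarith

lemma isDegenerate_of_sum_card_adj_le {e : ℕ}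
    (h : ∀ T : Finset V, ∑ v ∈ T, (T.filter fun u => G.Adj v u).card ≤ e * T.card) :
    G.IsDegenerate e := fun S hS =>
  Finset.exists_le_of_sum_le hS (by simpa [Finset.sum_const, mul_comm] using h S)

lemma isDegenerate_of_forall_adj_exists {ι : Type*} [Fintype ι] {H : ι → SimpleGraph V}
    (hH : ∀ i, (H i).IsDegenerate d) (hG : ∀ u v, G.Adj u v → ∃ i, (H i).Adj u v) :
    G.IsDegenerate (2 * Fintype.card ι * d) := by
  refine isDegenerate_of_sum_card_adj_le fun T => ?_
  have hdeg : ∀ v, (T.filter fun u => G.Adj v u).card ≤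
      ∑ i, (T.filter fun u => (H i).Adj v u).card := fun v =>
    (Finset.card_le_card fun u hu => by
      obtain ⟨i, hi⟩ := hG v u (Finset.mem_filter.1 hu).2
      exact Finset.mem_biUnion.2 ⟨i, Finset.mem_univ i,
        Finset.mem_filter.2 ⟨(Finset.mem_filter.1 hu).1, hi⟩⟩).trans Finset.card_biUnion_le
  calc ∑ v ∈ T, (T.filter fun u => G.Adj v u).card
      ≤ ∑ v ∈ T, ∑ i, (T.filter fun u => (H i).Adj v u).card :=
        Finset.sum_le_sum fun v _ => hdeg v
    _ = ∑ i, ∑ v ∈ T, (T.filter fun u => (H i).Adj v u).card := Finset.sum_comm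
    _ ≤ ∑ _i : ι, 2 * d * T.card := Finset.sum_le_sum fun i _ => (hH i).sum_card_adj_le T
    _ = 2 * Fintype.card ι * d * T.card := by rw [Finset.sum_const, Finset.card_univ]; ring

lemma bicliqueNum_le_of_injective [Fintype V] [Fintype W] {H : SimpleGraph W} (f : H →g G)
    (hf : Function.Injective f) : bicliqueNum H ≤ bicliqueNum G := by
  refine csSup_le_csSup ⟨Fintype.card V, ?_⟩ ⟨0, ∅, ∅, by simp⟩ ?_
  · rintro s ⟨A, -, -, rfl, -, -⟩
    exact Finset.card_le_univ A
  · rintro s ⟨A, B, hAB, rfl, hB, hadj⟩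
    refine ⟨A.map ⟨f, hf⟩, B.map ⟨f, hf⟩, (Finset.disjoint_map _).2 hAB,
      Finset.card_map _, (Finset.card_map _).trans hB, ?_⟩
    simp only [Finset.mem_map, Function.Embedding.coeFn_mk]
    rintro _ ⟨a, ha, rfl⟩ _ ⟨b, hb, rfl⟩
    exact f.map_rel (hadj a ha b hb)

def edgeColourClass {ι : Type*} (G : SimpleGraph V) (φ : Sym2 V → ι) (c : ι) :
    SimpleGraph V where
  Adj u v := G.Adj u v ∧ φ s(u, v) = c
  symm := ⟨fun _ _ ⟨h, hc⟩ => ⟨h.symm, by rwa [Sym2.eq_swap]⟩⟩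
  loopless := ⟨fun _ ⟨h, _⟩ => G.irrefl h⟩

@[simp]
lemma edgeColourClass_adj {ι : Type*} {φ : Sym2 V → ι} {c : ι} {u v : V} :
    (G.edgeColourClass φ c).Adj u v ↔ G.Adj u v ∧ φ s(u, v) = c :=
  Iff.rfl

end SimpleGraph

open SimpleGraph

theorem stmt2_general (k : ℕ)
    (P : ∀ (V : Type) [Fintype V], SimpleGraph V → Prop)
    (hdb : ∃ f : ℕ → ℕ, ∀ (V : Type) [Fintype V] (G : SimpleGraph V),
      P V G → degeneracy G ≤ f (bicliqueNum G)) :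
    ∃ f : ℕ → ℕ, ∀ (V : Type) [Fintype V] (G : SimpleGraph V),
      (∃ φ : Sym2 V → Fin k, ∀ (c : Fin k) (S : Set V),
        P S (monochromaticInduced G φ c S)) →
      degeneracy G ≤ f (bicliqueNum G) := by
  obtain ⟨f, hf⟩ := hdb
  refine ⟨fun n => 2 * k * (Finset.range (n + 1)).sup f, ?_⟩
  rintro V _ G ⟨φ, hφ⟩
  have hcolour : ∀ c (U : Set V), (∀ v, v ∈ U) → (G.edgeColourClass φ c).IsDegenerate
      ((Finset.range (bicliqueNum G + 1)).sup f) := by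
    intro c U hU
    -- `U` stays abstract so that the `Fintype ↥U` instance is the one in `hφ`,
    -- not `Set.fintypeUniv`.
    let toU : G.edgeColourClass φ c →g monochromaticInduced G φ c U :=
      ⟨fun v => ⟨v, hU v⟩, fun h => h⟩
    let toG : monochromaticInduced G φ c U →g G := ⟨Subtype.val, And.left⟩
    have hτ := bicliqueNum_le_of_injective toG Subtype.val_injective
    have hdeg := hf _ _ (hφ c U)
    refine ((isDegenerate_degeneracy _).mono (hdeg.trans ?_)).comap toU
      fun _ _ h => congrArg Subtype.val h
    exact Finset.le_sup (Finset.mem_range.2 (Nat.lt_succ_of_le hτ))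
  simpa using degeneracy_le_of_isDegenerate
    (isDegenerate_of_forall_adj_exists (fun c => hcolour c Set.univ Set.mem_univ)
      fun u v h => ⟨φ s(u, v), edgeColourClass_adj.2 ⟨h, rfl⟩⟩)

/-- If a hereditary class `P` of finite simple graphs is degree-bounded, then
so is its `k`-extension (the class of `(P, k)`-colourable graphs), for every `k ≥ 1`. -/
theorem stmt2 (k : ℕ) (hk : 1 ≤ k)
    (P : ∀ (V : Type) [Fintype V], SimpleGraph V → Prop)
    (hered : ∀ (V : Type) [Fintype V] (G : SimpleGraph V) (S : Set V),
      P V G → P S (G.induce S))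
    (hdb : ∃ f : ℕ → ℕ, ∀ (V : Type) [Fintype V] (G : SimpleGraph V),
      P V G → degeneracy G ≤ f (bicliqueNum G)) :
    ∃ f : ℕ → ℕ, ∀ (V : Type) [Fintype V] (G : SimpleGraph V),
      (∃ φ : Sym2 V → Fin k, ∀ (c : Fin k) (S : Set V),
        P S (monochromaticInduced G φ c S)) →
      degeneracy G ≤ f (bicliqueNum G) :=
  stmt2_general k P hdb
end

section
/- For all integers s, k ≥ 1 there exists an integer t such that for every colouring of the edges of the complete bipartite graph K_{t,t} with k colours, there is a monochromatic copy of K_{s,s}: some colour class contains K_{s,s} as a subgraph. -/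
/-!
Fix `n = k(s - 1) + 1` rows. Each column `b` has a colour pattern `i ↦ φ (i, b)` on these rows,
and there are only `k ^ n` patterns, so among `n · k ^ n` columns some `s` share a pattern `f`.
Since `f` takes `n > k(s - 1)` values in `k` colours, it takes some colour `c` on `s` rows, and
those rows and columns span a `K_{s,s}` of colour `c`.
-/

open Finset Fintype

theorem Fintype.exists_card_eq_succ_of_mul_lt_card {α β : Type*} [Fintype α] [Fintype β]
    [DecidableEq β] (f : α → β) {s : ℕ} (h : card β * s < card α) :
    ∃ y : β, ∃ A : Finset α, #A = s + 1 ∧ ∀ a ∈ A, f a = y := by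
  obtain ⟨y, hy⟩ := exists_lt_card_fiber_of_mul_lt_card f h
  obtain ⟨A, hA, hcard⟩ := exists_subset_card_eq (Nat.succ_le_of_lt hy)
  exact ⟨y, A, hcard, fun a ha => (mem_filter.1 (hA ha)).2⟩

theorem exists_monochromatic_rectangle {α β γ : Type*} [Fintype α] [Fintype β] [Fintype γ]
    (φ : α → β → γ) {s : ℕ} (hα : card γ * s < card α) (hβ : card γ ^ card α * s < card β) :
    ∃ c : γ, ∃ A : Finset α, ∃ B : Finset β, #A = s + 1 ∧ #B = s + 1 ∧
      ∀ a ∈ A, ∀ b ∈ B, φ a b = c := by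
  classical
  obtain ⟨f, B, hB, hBf⟩ := exists_card_eq_succ_of_mul_lt_card (fun b a => φ a b)
    (by rwa [card_fun])
  obtain ⟨c, A, hA, hAc⟩ := exists_card_eq_succ_of_mul_lt_card f hα
  exact ⟨c, A, B, hA, hB, fun a ha b hb => (congrFun (hBf b hb) a).trans (hAc a ha)⟩

/-- For all `s, k ≥ 1` there is `t` such that every `k`-colouring of the
edges of `K_{t,t}` (edges are modelled as pairs in `Fin t × Fin t`, one side times the other)
yields a monochromatic copy of `K_{s,s}`: a colour `c` and `s`-sets `A`, `B` of left and right
vertices with all edges between `A` and `B` coloured `c`. -/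
theorem stmt13 (s k : ℕ) (hs : 1 ≤ s) (hk : 1 ≤ k) :
    ∃ t : ℕ, ∀ φ : Fin t × Fin t → Fin k,
      ∃ c : Fin k, ∃ A B : Finset (Fin t), A.card = s ∧ B.card = s ∧
        ∀ a ∈ A, ∀ b ∈ B, φ (a, b) = c := by
  obtain ⟨r, rfl⟩ := Nat.exists_eq_add_of_le' hs
  set n := k * r + 1
  have hpow : 1 ≤ k ^ n := Nat.one_le_pow _ _ hk
  have hrn : r < n := Nat.lt_succ_of_le (Nat.le_mul_of_pos_left r hk)
  have hnt : n ≤ n * k ^ n := Nat.le_mul_of_pos_right n hpow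
  refine ⟨n * k ^ n, fun φ => ?_⟩
  obtain ⟨c, A, B, hA, hB, hAB⟩ :=
    exists_monochromatic_rectangle (fun (i : Fin n) b => φ (Fin.castLE hnt i, b)) (s := r)
      (by simp [n])
      (by simpa [mul_comm n] using Nat.mul_lt_mul_of_pos_left hrn hpow)
  refine ⟨c, A.map (Fin.castLEEmb hnt), B, by rw [card_map, hA], hB, ?_⟩
  simp only [mem_map]
  rintro _ ⟨i, hi, rfl⟩ b hb
  exact hAB i hi b hb
end

section
/- For every integer s ≥ 1 there exists an integer t such that every orientation D of the complete bipartite graph K_{t,t} contains →K_{s,s} as an induced subdigraph; that is, there exist sets S and T of s vertices each, lying on opposite sides of the bipartition, such that every arc of D between S and T is oriented from S to T. -/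
/-!
Colour the pair `(a, b)` by whether the arc goes from `a` to `b`. Fix `2s` vertices `T` on the
right: every left vertex `a` has `s` of them in a single colour, so it picks an `s`-subset of `T`
and a colour. There are only `2 · C(2s, s)` such choices, so among `2 · C(2s, s) · s` left vertices
some `s` make the same choice, and they span a monochromatic `s × s` rectangle.
-/

open Classical

/-- A digraph (given as a relation) is an oriented graph: no loops and no digons. -/
def IsOriented {V : Type*} (D : V → V → Prop) : Prop :=
  ∀ u v : V, D u v → ¬ D v u

/-- `D` is an orientation of the simple graph `G`. -/
def IsOrientationOf {V : Type*} (G : SimpleGraph V) (D : V → V → Prop) : Prop :=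
  IsOriented D ∧ ∀ u v : V, G.Adj u v ↔ (D u v ∨ D v u)

open Finset

theorem Finset.exists_monochromatic_subset {β : Type*} {s : ℕ} (c : β → Bool) {T : Finset β}
    (hT : 2 * s ≤ #T + 1) : ∃ S ⊆ T, ∃ k, #S = s ∧ ∀ b ∈ S, c b = k := by
  have hsplit := card_filter_add_card_filter_not (s := T) (fun b => c b = true)
  obtain ⟨k, hk⟩ : ∃ k, s ≤ #{b ∈ T | c b = k} := by
    by_cases h : s ≤ #{b ∈ T | c b = true}
    · exact ⟨true, h⟩
    · refine ⟨false, ?_⟩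
      simp only [Bool.not_eq_true] at hsplit
      omega
  obtain ⟨S, hS, rfl⟩ := exists_subset_card_eq hk
  exact ⟨S, hS.trans (filter_subset _ _), k, rfl, fun b hb => (mem_filter.mp (hS hb)).2⟩

theorem Finset.exists_monochromatic_rectangle {α β : Type*} {s : ℕ} (c : α → β → Bool)
    {U : Finset α} {T : Finset β} (hT : 2 * s ≤ #T + 1)
    (hU : 2 * (#T).choose s * s ≤ #U) :
    ∃ A ⊆ U, ∃ B ⊆ T, ∃ k, #A = s ∧ #B = s ∧ ∀ a ∈ A, ∀ b ∈ B, c a b = k := by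
  choose S hST k hS hk using fun a => exists_monochromatic_subset (c a) hT
  have hmaps : ∀ a ∈ U, (S a, k a) ∈ T.powersetCard s ×ˢ (univ : Finset Bool) := fun a _ =>
    mem_product.mpr ⟨mem_powersetCard.mpr ⟨hST a, hS a⟩, mem_univ _⟩
  have hne : (T.powersetCard s ×ˢ (univ : Finset Bool)).Nonempty :=
    (powersetCard_nonempty.mpr (by omega)).product univ_nonempty
  have hcard : #(T.powersetCard s ×ˢ (univ : Finset Bool)) * s ≤ #U := by
    rwa [card_product, card_powersetCard, card_univ, Fintype.card_bool, mul_comm _ 2]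
  obtain ⟨⟨B, k₀⟩, hB, hfiber⟩ := exists_le_card_fiber_of_mul_le_card_of_maps_to hmaps hne hcard
  obtain ⟨A, hA, hAcard⟩ := exists_subset_card_eq hfiber
  have hfib : ∀ a ∈ A, a ∈ U ∧ S a = B ∧ k a = k₀ := fun a ha => by
    simpa [Prod.ext_iff] using hA ha
  obtain ⟨hBT, hBcard⟩ := mem_powersetCard.mp (mem_product.mp hB).1
  refine ⟨A, fun a ha => (hfib a ha).1, B, hBT, k₀, hAcard, hBcard, fun a ha b hb => ?_⟩
  obtain ⟨-, rfl, rfl⟩ := hfib a ha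
  exact hk a b hb

theorem IsOrientationOf.completeBipartiteGraph_inr_inl {α β : Type*} {D : α ⊕ β → α ⊕ β → Prop}
    (hD : IsOrientationOf (completeBipartiteGraph α β) D) {a : α} {b : β}
    (h : ¬ D (Sum.inl a) (Sum.inr b)) : D (Sum.inr b) (Sum.inl a) :=
  ((hD.2 _ _).mp (by simp)).resolve_left h

theorem stmt14_general (s : ℕ) :
    ∃ t : ℕ, ∀ D : (Fin t ⊕ Fin t) → (Fin t ⊕ Fin t) → Prop,
      IsOrientationOf (completeBipartiteGraph (Fin t) (Fin t)) D →
      ∃ A B : Finset (Fin t), A.card = s ∧ B.card = s ∧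
        ((∀ a ∈ A, ∀ b ∈ B, D (Sum.inl a) (Sum.inr b)) ∨
         (∀ a ∈ A, ∀ b ∈ B, D (Sum.inr b) (Sum.inl a))) := by
  refine ⟨2 * (2 * s).choose s * s, fun D hD => ?_⟩
  have huniv : 2 * s ≤ #(univ : Finset (Fin (2 * (2 * s).choose s * s))) := by
    have := Nat.choose_pos (Nat.le_mul_of_pos_left s two_pos)
    rw [card_univ, Fintype.card_fin]
    nlinarith
  obtain ⟨T, -, hT⟩ := exists_subset_card_eq huniv
  obtain ⟨A, -, B, -, k, hA, hB, hAB⟩ := exists_monochromatic_rectangle (s := s)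
    (fun a b => decide (D (Sum.inl a) (Sum.inr b))) (U := univ) (T := T) (by omega)
    (by rw [hT, card_univ, Fintype.card_fin])
  refine ⟨A, B, hA, hB, ?_⟩
  cases k
  · exact .inr fun a ha b hb => hD.completeBipartiteGraph_inr_inl (by simpa using hAB a ha b hb)
  · exact .inl fun a ha b hb => by simpa using hAB a ha b hb

/-- For every `s ≥ 1` there is `t` such that every orientation `D` of the
complete bipartite graph `K_{t,t}` contains `→K_{s,s}` as an induced subdigraph: there are
`s`-sets `S`, `T` on opposite sides of the bipartition with every arc between them oriented
from `S` to `T`. -/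
theorem stmt14 (s : ℕ) (hs : 1 ≤ s) :
    ∃ t : ℕ, ∀ D : (Fin t ⊕ Fin t) → (Fin t ⊕ Fin t) → Prop,
      IsOrientationOf (completeBipartiteGraph (Fin t) (Fin t)) D →
      ∃ A B : Finset (Fin t), A.card = s ∧ B.card = s ∧
        ((∀ a ∈ A, ∀ b ∈ B, D (Sum.inl a) (Sum.inr b)) ∨
         (∀ a ∈ A, ∀ b ∈ B, D (Sum.inr b) (Sum.inl a))) :=
  stmt14_general s
end

section
/- Let ℓ ≥ 3 be an integer and let D be a digraph containing an induced subdigraph K which is an antidirected subdivision of the complete graph K_ℓ. Then D contains an induced subdigraph which is an antidirected cycle on at least 2ℓ vertices. -/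
open Classical

/-- The induced subdigraph of `D` on `S` is antidirected: every vertex of `S` is a source or a
sink within `S`. -/
def AntidirectedOn {V : Type*} (D : V → V → Prop) (S : Set V) : Prop :=
  ∀ v ∈ S, (∀ u ∈ S, ¬ D u v) ∨ (∀ u ∈ S, ¬ D v u)

/-- `H` is an even subdivision of the complete graph `K_r`: there are `r` branch vertices and,
between any two of them, a path of positive even length; these paths are internally disjoint
from each other and from the branch vertices, and together they cover all vertices and all
edges of `H`. -/
def IsEvenSubdivOfComplete {W : Type*} (H : SimpleGraph W) (r : ℕ) : Prop :=
  ∃ b : Fin r → W, Function.Injective b ∧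
    ∃ P : ∀ i j : Fin r, i < j → H.Walk (b i) (b j),
      (∀ i j (h : i < j), (P i j h).IsPath) ∧
      (∀ i j (h : i < j), Even (P i j h).length ∧ 0 < (P i j h).length) ∧
      (∀ i j (h : i < j), ∀ w ∈ (P i j h).support, w ∈ Set.range b → w = b i ∨ w = b j) ∧
      (∀ i j (hij : i < j), ∀ k l (hkl : k < l), (i, j) ≠ (k, l) →
        ∀ w, w ∈ (P i j hij).support → w ∈ (P k l hkl).support → w ∈ Set.range b) ∧
      (∀ w : W, w ∈ Set.range b ∨ ∃ i j, ∃ h : i < j, w ∈ (P i j h).support) ∧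
      (∀ e ∈ H.edgeSet, ∃ i j, ∃ h : i < j, e ∈ (P i j h).edges)

/-!
Going around the branch vertices `b₀, b₁, …, bₙ, b₀` of the subdivided `K_{n+1}` along the
corresponding subdivision paths gives a cycle of length at least `2(n + 1)`, as every subdivision
path has length at least two. This cycle is chordless: a chord lies on an unused subdivision path,
which meets the cycle only in branch vertices, so the chord would be that whole path. Hence its
vertex set induces a cycle, and it is antidirected because it lies inside the antidirected `S`.
-/

namespace SimpleGraph.Walk

variable {V V' : Type*} {G : SimpleGraph V} {G' : SimpleGraph V'}

theorem IsChordless.map {u v : V} {p : G.Walk u v} (hp : p.IsChordless) (f : G ↪g G') :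
    (p.map f.toHom).IsChordless := by
  rw [isChordless_iff_forall_mem_edges]
  intro x y hx hy hxy
  rw [support_map, List.mem_map] at hx hy
  obtain ⟨x, hx, rfl⟩ := hx
  obtain ⟨y, hy, rfl⟩ := hy
  rw [edges_map]
  exact List.mem_map_of_mem (hp.mem_edges hx hy (f.map_adj_iff.mp hxy))

theorem IsPath.start_notMem_support_tail {u v : V} {p : G.Walk u v} (hp : p.IsPath) :
    u ∉ p.support.tail := by
  have := hp.support_nodup
  rw [← cons_tail_support] at this
  exact (List.nodup_cons.mp this).1

theorem IsPath.append_of_mem_of_mem {u v w : V} {p : G.Walk u v} {q : G.Walk v w}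
    (hp : p.IsPath) (hq : q.IsPath) (hpq : ∀ x ∈ p.support, x ∈ q.support → x = v) :
    (p.append q).IsPath := by
  rw [isPath_def, support_append, List.nodup_append]
  refine ⟨hp.support_nodup, hq.support_nodup.sublist (List.tail_sublist _), ?_⟩
  rintro x hx y hy rfl
  exact hq.start_notMem_support_tail (hpq x hx (List.mem_of_mem_tail hy) ▸ hy)

theorem getVert_fin_add_one {u : V} {p : G.Walk u u} {m : ℕ} (hm : p.length = m + 1)
    (i : Fin (m + 1)) : p.getVert (i + 1 : Fin (m + 1)) = p.getVert (i + 1) := by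
  rw [Fin.val_add_one]
  split_ifs with h
  · rw [h, Fin.val_last, ← hm, getVert_length, getVert_zero]
  · rfl

theorem IsCycle.nonempty_induce_support_iso_cycleGraph {u : V} {p : G.Walk u u}
    (hp : p.IsCycle) (hc : p.IsChordless) :
    Nonempty (G.induce {v | v ∈ p.support} ≃g cycleGraph p.length) := by
  obtain ⟨m, hm⟩ : ∃ m, p.length = m + 2 :=
    ⟨p.length - 2, by have := hp.three_le_length; omega⟩
  rw [hm]
  have hsucc := p.getVert_fin_add_one (m := m + 1) hm
  have hinj : Function.Injective fun i : Fin (m + 2) => p.getVert i := fun i j hij =>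
    Fin.ext (hp.getVert_injOn' (by simp only [Set.mem_ofPred_eq]; omega)
      (by simp only [Set.mem_ofPred_eq]; omega) hij)
  have hmem : ∀ v, v ∈ p.support ↔ ∃ i : Fin (m + 2), p.getVert i = v := by
    intro v
    rw [mem_support_iff_exists_getVert]
    constructor
    · rintro ⟨k, rfl, hk⟩
      by_cases hkl : k = p.length
      · exact ⟨0, by rw [hkl, getVert_length, Fin.val_zero, getVert_zero]⟩
      · exact ⟨⟨k, by omega⟩, rfl⟩
    · rintro ⟨i, rfl⟩
      exact ⟨i, rfl, by omega⟩
  let e : Fin (m + 2) ≃ {v | v ∈ p.support} :=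
    Equiv.ofBijective (fun i => ⟨p.getVert i, (hmem _).mpr ⟨i, rfl⟩⟩)
      ⟨fun i j hij => hinj (congrArg Subtype.val hij),
        fun ⟨v, hv⟩ => ((hmem v).mp hv).imp fun i hi => Subtype.ext hi⟩
  refine ⟨RelIso.symm (⟨e, fun {i j} => ?_⟩ : cycleGraph (m + 2) ≃g G.induce _)⟩
  change G.Adj (p.getVert i) (p.getVert j) ↔ i - j = 1 ∨ j - i = 1
  rw [sub_eq_iff_eq_add, sub_eq_iff_eq_add, add_comm 1 j, add_comm 1 i]
  constructor
  · intro hadj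
    obtain ⟨t, ht, hts⟩ := (p.mk_mem_edges_iff_exists).mp
      (hc.mem_edges (p.getVert_mem_support _) (p.getVert_mem_support _) hadj)
    rw [← hsucc ⟨t, by omega⟩] at hts
    rcases Sym2.eq_iff.mp hts with ⟨h₁, h₂⟩ | ⟨h₁, h₂⟩
    · right; rw [← hinj h₂, ← hinj (a₁ := ⟨t, _⟩) h₁]
    · left; rw [← hinj h₂, ← hinj (a₁ := ⟨t, _⟩) h₁]
  · rintro (rfl | rfl)
    · rw [hsucc]; exact (p.adj_getVert_succ (by omega)).symm
    · rw [hsucc]; exact p.adj_getVert_succ (by omega)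

end SimpleGraph.Walk

theorem AntidirectedOn.mono {V : Type*} {D : V → V → Prop} {S T : Set V}
    (hS : AntidirectedOn D S) (hTS : T ⊆ S) : AntidirectedOn D T := fun v hv =>
  (hS v (hTS hv)).imp (fun h u hu => h u (hTS hu)) (fun h u hu => h u (hTS hu))

open SimpleGraph Walk

structure SubdivisionOfComplete {W : Type*} (H : SimpleGraph W) (r : ℕ) where
  branch : Fin r → W
  branch_injective : Function.Injective branch
  path : ∀ i j : Fin r, i < j → H.Walk (branch i) (branch j)
  isPath_path : ∀ i j h, (path i j h).IsPath
  two_le_length : ∀ i j h, 2 ≤ (path i j h).length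
  eq_branch_of_mem : ∀ i j h, ∀ w ∈ (path i j h).support, w ∈ Set.range branch →
    w = branch i ∨ w = branch j
  mem_range_of_mem_of_mem : ∀ i j (hij : i < j) k l (hkl : k < l), (i, j) ≠ (k, l) →
    ∀ w ∈ (path i j hij).support, w ∈ (path k l hkl).support → w ∈ Set.range branch
  exists_mem_edges : ∀ e ∈ H.edgeSet, ∃ i j h, e ∈ (path i j h).edges

theorem IsEvenSubdivOfComplete.nonempty_subdivisionOfComplete {W : Type*} {H : SimpleGraph W}
    {r : ℕ} (h : IsEvenSubdivOfComplete H r) : Nonempty (SubdivisionOfComplete H r) := by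
  obtain ⟨b, hb, P, hpath, hlen, hbranch, hdisj, -, hedges⟩ := h
  exact ⟨⟨b, hb, P, hpath, fun i j h => by obtain ⟨⟨k, hk⟩, hpos⟩ := hlen i j h; omega,
    hbranch, hdisj, hedges⟩⟩

namespace SubdivisionOfComplete

variable {W : Type*} {H : SimpleGraph W}

theorem eq_of_mem_of_mem {r : ℕ} (K : SubdivisionOfComplete H r) {i j k l : Fin r}
    {hij : i < j} {hkl : k < l} (hne : (i, j) ≠ (k, l)) {w : W}
    (hw : w ∈ (K.path i j hij).support) (hw' : w ∈ (K.path k l hkl).support) :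
    w = K.branch i ∨ w = K.branch j :=
  K.eq_branch_of_mem i j hij w hw (K.mem_range_of_mem_of_mem i j hij k l hkl hne w hw hw')

theorem isChordless_of_forall_mem_path {r : ℕ} (K : SubdivisionOfComplete H r) {u v : W}
    (C : H.Walk u v) (used : Fin r → Fin r → Prop)
    (hsupp : ∀ w ∈ C.support, ∃ i j h, used i j ∧ w ∈ (K.path i j h).support)
    (hedges : ∀ i j h, used i j → (K.path i j h).edges ⊆ C.edges) : C.IsChordless := by
  rw [isChordless_iff_forall_mem_edges]
  intro x y hx hy hxy
  obtain ⟨i, j, hij, he⟩ := K.exists_mem_edges s(x, y) hxy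
  by_cases hused : used i j
  · exact hedges i j hij hused he
  have hbranch : ∀ w ∈ C.support, w ∈ (K.path i j hij).support →
      w = K.branch i ∨ w = K.branch j := by
    intro w hw hw'
    obtain ⟨k, l, hkl, hkl_used, hwkl⟩ := hsupp w hw
    refine K.eq_of_mem_of_mem (fun h => hused ?_) hw' hwkl
    obtain ⟨rfl, rfl⟩ := Prod.mk.inj h
    exact hkl_used
  have hxy_eq : s(x, y) = s(K.branch i, K.branch j) := by
    rcases hbranch x hx (fst_mem_support_of_mem_edges _ he) with rfl | rfl <;>
      rcases hbranch y hy (snd_mem_support_of_mem_edges _ he) with rfl | rfl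
    · exact absurd hxy (H.loopless.irrefl _)
    · rfl
    · exact Sym2.eq_swap
    · exact absurd hxy (H.loopless.irrefl _)
  rw [hxy_eq] at he
  have := (K.isPath_path i j hij).length_eq_one_of_mem_edges he
  have := K.two_le_length i j hij
  omega

section

variable {n : ℕ}

def consecutivePath (K : SubdivisionOfComplete H (n + 1)) (i : Fin n) :
    H.Walk (K.branch i.castSucc) (K.branch i.succ) :=
  K.path _ _ Fin.castSucc_lt_succ

theorem eq_of_mem_consecutivePath_of_mem_consecutivePath (K : SubdivisionOfComplete H (n + 1))
    {i j : Fin n} (hji : j.succ ≤ i.castSucc) {w : W} (hw : w ∈ (K.consecutivePath i).support)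
    (hw' : w ∈ (K.consecutivePath j).support) : w = K.branch i.castSucc := by
  rw [Fin.le_iff_val_le_val, Fin.val_succ, Fin.val_castSucc] at hji
  have hne : (i.castSucc, i.succ) ≠ (j.castSucc, j.succ) := by
    simp only [ne_eq, Prod.mk.injEq, Fin.ext_iff, Fin.val_castSucc, Fin.val_succ]
    omega
  refine (K.eq_of_mem_of_mem hne hw hw').resolve_right fun h => ?_
  rcases K.eq_of_mem_of_mem (Ne.symm hne) hw' hw with h' | h' <;>
  · have := congrArg Fin.val (K.branch_injective (h.symm.trans h'))
    simp only [Fin.val_castSucc, Fin.val_succ] at this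
    omega

theorem exists_isPath_consecutive (K : SubdivisionOfComplete H (n + 1)) (m : Fin (n + 1)) :
    ∃ p : H.Walk (K.branch 0) (K.branch m), p.IsPath ∧ 2 * (m : ℕ) ≤ p.length ∧
      (∀ w ∈ p.support, w = K.branch 0 ∨
        ∃ i : Fin n, i.succ ≤ m ∧ w ∈ (K.consecutivePath i).support) ∧
      ∀ i : Fin n, i.succ ≤ m → (K.consecutivePath i).edges ⊆ p.edges := by
  induction m using Fin.induction with
  | zero =>
    refine ⟨nil, IsPath.nil, by simp, by simp, fun i hi => ?_⟩
    exact absurd hi (by simp)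
  | succ i ih =>
    obtain ⟨p, hp, hlen, hsupp, hedges⟩ := ih
    have hjoin : ∀ w ∈ p.support, w ∈ (K.consecutivePath i).support →
        w = K.branch i.castSucc := by
      intro w hw hw'
      rcases hsupp w hw with rfl | ⟨j, hj, hwj⟩
      · refine (K.eq_branch_of_mem _ _ _ _ hw' ⟨0, rfl⟩).resolve_right fun h => ?_
        exact Fin.succ_ne_zero i (K.branch_injective h).symm
      · exact K.eq_of_mem_consecutivePath_of_mem_consecutivePath hj hw' hwj
    refine ⟨p.append (K.consecutivePath i), hp.append_of_mem_of_mem (K.isPath_path _ _ _) hjoin,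
      ?_, ?_, ?_⟩
    · rw [length_append]
      have := K.two_le_length _ _ (Fin.castSucc_lt_succ (i := i))
      simp only [Fin.val_succ, Fin.val_castSucc] at hlen ⊢
      unfold consecutivePath
      omega
    · intro w hw
      rcases (mem_support_append_iff _ _).mp hw with hw | hw
      · exact (hsupp w hw).imp_right fun ⟨j, hj, hwj⟩ =>
          ⟨j, hj.trans Fin.castSucc_lt_succ.le, hwj⟩
      · exact Or.inr ⟨i, le_rfl, hw⟩
    · intro j hj
      rw [edges_append]
      rcases (Fin.succ_le_succ_iff.mp hj).lt_or_eq with hlt | rfl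
      · exact List.Subset.trans (hedges j (Fin.succ_le_castSucc_iff.mpr hlt))
          (List.subset_append_left _ _)
      · exact List.subset_append_right _ _

theorem exists_isCycle_isChordless (K : SubdivisionOfComplete H (n + 1)) (hn : 2 ≤ n) :
    ∃ (u : W) (C : H.Walk u u), C.IsCycle ∧ C.IsChordless ∧ 2 * (n + 1) ≤ C.length := by
  obtain ⟨p, hp, hlen, hsupp, hedges⟩ := K.exists_isPath_consecutive (Fin.last n)
  have h0 : (0 : Fin (n + 1)) < Fin.last n := by simp [Fin.lt_def]; omega
  set q := K.path 0 (Fin.last n) h0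
  have hq : q.IsPath := K.isPath_path _ _ h0
  have hqlen : 2 ≤ q.length := K.two_le_length _ _ h0
  refine ⟨_, p.append q.reverse, ?_, ?_, ?_⟩
  · refine hp.isCycle_append hq.reverse (fun w hwp hwq => ?_) (Or.inr (by simp; omega))
    rcases hsupp w (List.mem_of_mem_tail hwp) with rfl | ⟨i, -, hwi⟩
    · exact hp.start_notMem_support_tail hwp
    · have hwq' : w ∈ q.support := by simpa using List.mem_of_mem_tail hwq
      have hne : (0, Fin.last n) ≠ (i.castSucc, i.succ) := by
        simp only [ne_eq, Prod.mk.injEq, Fin.ext_iff, Fin.val_zero, Fin.val_last,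
          Fin.val_castSucc, Fin.val_succ]
        omega
      rcases K.eq_of_mem_of_mem hne hwq' hwi with rfl | rfl
      · exact hp.start_notMem_support_tail hwp
      · exact hq.reverse.start_notMem_support_tail hwq
  · refine K.isChordless_of_forall_mem_path _
      (fun i j => (∃ i' : Fin n, i = i'.castSucc ∧ j = i'.succ) ∨ (i = 0 ∧ j = Fin.last n))
      (fun w hw => ?_) (fun i j hij hused => ?_)
    · rcases (mem_support_append_iff _ _).mp hw with hw | hw
      · rcases hsupp w hw with rfl | ⟨i, -, hwi⟩
        · exact ⟨0, Fin.last n, h0, Or.inr ⟨rfl, rfl⟩, q.start_mem_support⟩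
        · exact ⟨_, _, _, Or.inl ⟨i, rfl, rfl⟩, hwi⟩
      · exact ⟨0, Fin.last n, h0, Or.inr ⟨rfl, rfl⟩, by simpa using hw⟩
    · rw [edges_append]
      rcases hused with ⟨i, rfl, rfl⟩ | ⟨rfl, rfl⟩
      · exact List.Subset.trans (hedges i (Fin.le_last _)) (List.subset_append_left _ _)
      · intro e he
        exact List.mem_append_right _ (by simpa [edges_reverse] using he)
  · rw [length_append, length_reverse]
    simp only [Fin.val_last] at hlen
    omega

end

end SubdivisionOfComplete

theorem stmt15_general (ℓ : ℕ) (hℓ : 3 ≤ ℓ) (V : Type) (D : V → V → Prop)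
    (S : Set V)
    (hanti : AntidirectedOn D S)
    (hsub : IsEvenSubdivOfComplete ((SimpleGraph.fromRel D).induce S) ℓ) :
    ∃ T : Set V, AntidirectedOn D T ∧ ∃ n : ℕ, 2 * ℓ ≤ n ∧
      Nonempty ((SimpleGraph.fromRel D).induce T ≃g SimpleGraph.cycleGraph n) := by
  obtain ⟨n, rfl⟩ : ∃ n, ℓ = n + 1 := ⟨ℓ - 1, by omega⟩
  obtain ⟨K⟩ := hsub.nonempty_subdivisionOfComplete
  obtain ⟨u, C, hC, hCchordless, hClen⟩ := K.exists_isCycle_isChordless (by omega)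
  let f := Embedding.induce (G := SimpleGraph.fromRel D) S
  refine ⟨{v | v ∈ (C.map f.toHom).support}, hanti.mono ?_, (C.map f.toHom).length,
    by rwa [length_map], (hC.map f.injective).nonempty_induce_support_iso_cycleGraph
      (hCchordless.map f)⟩
  intro v hv
  obtain ⟨w, -, rfl⟩ := List.mem_map.mp (support_map f.toHom C ▸ hv)
  exact w.2

/-- Let `ℓ ≥ 3` and let `D` be a finite loopless digraph containing an
induced subdigraph (on a vertex set `S`) which is an antidirected subdivision of `K_ℓ`. Then
`D` contains an induced subdigraph which is an antidirected cycle on at least `2ℓ` vertices. -/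
theorem stmt15 (ℓ : ℕ) (hℓ : 3 ≤ ℓ) (V : Type) [Fintype V] (D : V → V → Prop)
    (hirr : Irreflexive D) (S : Set V)
    (hanti : AntidirectedOn D S)
    (hsub : IsEvenSubdivOfComplete ((SimpleGraph.fromRel D).induce S) ℓ) :
    ∃ T : Set V, AntidirectedOn D T ∧ ∃ n : ℕ, 2 * ℓ ≤ n ∧
      Nonempty ((SimpleGraph.fromRel D).induce T ≃g SimpleGraph.cycleGraph n) :=
  stmt15_general ℓ hℓ V D S hanti hsub
end
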